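/- arXiv:0810.3985 — 4 statements merged into one kernel-verified Lean document; each statement's English description precedes it below -/
import Mathlib

section
/- Let X and Y be independent real-valued random variables with distribution functions F and G respectively, and let α = P(Y ≤ X) > 0. Then for every real x, P(X ≤ x | Y ≤ X) = α^{-1} ∫_{(-∞,x]} G(z) dF(z), where the integral is the Lebesgue–Stieltjes integral with respect to F. -/
open MeasureTheory Set

/-- Under left truncation, the conditional distribution of the observed `X`'s is
`F*(x) = α⁻¹ ∫_{(-∞,x]} G(z) dF(z)`, the integral being with respect to the law of `X`. -/
theorem truncated_marginal
    {Ω : Type*} [MeasurableSpace Ω] (ℙ : Measure Ω) [IsProbabilityMeasure ℙ]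
    (X Y : Ω → ℝ) (hX : Measurable X) (hY : Measurable Y)
    (hindep : ProbabilityTheory.IndepFun X Y ℙ)
    (G : ℝ → ℝ) (hG : ∀ y, G y = (ℙ {ω | Y ω ≤ y}).toReal)
    (α : ℝ) (hα : α = (ℙ {ω | Y ω ≤ X ω}).toReal) (hαpos : 0 < α) :
    ∀ x : ℝ,
      (ℙ {ω | X ω ≤ x ∧ Y ω ≤ X ω}).toReal / (ℙ {ω | Y ω ≤ X ω}).toReal
        = α⁻¹ * ∫ z in Iic x, G z ∂(ℙ.map X) := by
  intro x
  set μ := ℙ.map X with hμ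
  set ν := ℙ.map Y with hν
  have hXY : Measurable (fun ω => (X ω, Y ω)) := hX.prodMk hY
  have hmap : ℙ.map (fun ω => (X ω, Y ω)) = μ.prod ν :=
    (ProbabilityTheory.indepFun_iff_map_prod_eq_prod_map_map hX.aemeasurable
      hY.aemeasurable).mp hindep
  haveI hνprob : IsProbabilityMeasure ν := Measure.isProbabilityMeasure_map hY.aemeasurable
  have hSmeas : MeasurableSet {p : ℝ × ℝ | p.1 ≤ x ∧ p.2 ≤ p.1} :=
    (measurableSet_le measurable_fst measurable_const).inter
      (measurableSet_le measurable_snd measurable_fst)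
  have key : ℙ {ω | X ω ≤ x ∧ Y ω ≤ X ω} = ∫⁻ z in Iic x, ν (Iic z) ∂μ := by
    have h1 : {ω | X ω ≤ x ∧ Y ω ≤ X ω}
        = (fun ω => (X ω, Y ω)) ⁻¹' {p : ℝ × ℝ | p.1 ≤ x ∧ p.2 ≤ p.1} := rfl
    rw [h1, ← Measure.map_apply hXY hSmeas, hmap, Measure.prod_apply hSmeas,
      ← lintegral_indicator measurableSet_Iic]
    congr 1
    ext z
    by_cases hz : z ≤ x
    · have : (Prod.mk z ⁻¹' {p : ℝ × ℝ | p.1 ≤ x ∧ p.2 ≤ p.1}) = Iic z := by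
        ext y; simp [hz]
      rw [this, indicator_of_mem (mem_Iic.mpr hz)]
    · have : (Prod.mk z ⁻¹' {p : ℝ × ℝ | p.1 ≤ x ∧ p.2 ≤ p.1}) = (∅ : Set ℝ) := by
        ext y; simp [hz]
      rw [this, indicator_of_notMem (by simpa using hz), measure_empty]
  have hG' : ∀ z, G z = (ν (Iic z)).toReal := by
    intro z
    rw [hG]
    congr 1
    rw [hν, Measure.map_apply hY measurableSet_Iic]
    rfl
  have hmono : Measurable fun z : ℝ => ν (Iic z) := by
    apply Monotone.measurable
    intro a b hab
    exact measure_mono (Iic_subset_Iic.mpr hab)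
  have hint : ∫ z in Iic x, G z ∂μ = (∫⁻ z in Iic x, ν (Iic z) ∂μ).toReal := by
    simp_rw [hG']
    exact integral_toReal hmono.aemeasurable (Filter.Eventually.of_forall
      fun z => measure_lt_top ν _)
  rw [← hα, div_eq_inv_mul]
  congr 1
  rw [hint, key]
end

section
/- Let F, G be distribution functions with F continuous, α ∈ (0,1], dF* = α^{-1} G dF, C(z) = α^{-1} G(z)(1 − F(z)). Suppose ∫ dF/G < ∞. Then for any a with F(a) < 1, the double integral ∫_{(-∞,a]} (∫_{(-∞,x)} dF*(y)/C(y)^2) |φ(x)| (1 − F(x)) / C(x) dF*(x) is finite whenever φ is bounded on (-∞, a]. -/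
open MeasureTheory Set

/-!
On `(-∞, a]` the survival function `1 - F` stays above `c = 1 - F(a) > 0`. Hence
`dF*/C² = α dF / (G (1 - F)²) ≤ (α / c²) dF/G`, so by (A)(ii) the inner integral is bounded
uniformly in `x ≤ a`, while in the outer integral `(1 - F)/C dF* = dF` and `|φ| ≤ M`.
The double integral is therefore at most `(α / c²) (∫ dF/G) · M · F(a)`.
-/

open ENNReal ProbabilityTheory

lemma inv_mul_mul_one_div_sq_le {α g c t : ℝ} (hα : 0 < α) (hg : 0 ≤ g) (hc : 0 < c)
    (hct : c ≤ t) : α⁻¹ * g * (1 / (α⁻¹ * g * t) ^ 2) ≤ α / c ^ 2 * (1 / g) := by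
  rcases hg.eq_or_lt with rfl | hg
  · simp
  have ht : 0 < t := hc.trans_le hct
  calc α⁻¹ * g * (1 / (α⁻¹ * g * t) ^ 2) = α / (g * t ^ 2) := by field_simp
    _ ≤ α / (g * c ^ 2) := by gcongr
    _ = α / c ^ 2 * (1 / g) := by field_simp

lemma mul_mul_div_mul_le {w p t : ℝ} (hw : 0 ≤ w) (hp : 0 ≤ p) (ht : t ≠ 0) :
    w * (p * t / (w * t)) ≤ p := by
  rcases hw.eq_or_lt with rfl | hw
  · simpa using hp
  · exact (by field_simp : w * (p * t / (w * t)) = p).le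

section WithDensity

variable {X : Type*} [MeasurableSpace X] {μ : Measure X} {s : Set X}

lemma setLIntegral_withDensity_inv_sq_le {G t : X → ℝ} {α c : ℝ} (hs : MeasurableSet s)
    (hG : Measurable G) (hG0 : ∀ y, 0 ≤ G y) (hα : 0 < α) (hc : 0 < c)
    (hct : ∀ y ∈ s, c ≤ t y) :
    ∫⁻ y in s, ENNReal.ofReal (1 / (α⁻¹ * G y * t y) ^ 2)
        ∂μ.withDensity (fun z => ENNReal.ofReal (α⁻¹ * G z)) ≤
      ENNReal.ofReal (α / c ^ 2) * ∫⁻ y, ENNReal.ofReal (1 / G y) ∂μ := by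
  calc ∫⁻ y in s, ENNReal.ofReal (1 / (α⁻¹ * G y * t y) ^ 2)
        ∂μ.withDensity (fun z => ENNReal.ofReal (α⁻¹ * G z))
      ≤ ∫⁻ y in s, ENNReal.ofReal (α⁻¹ * G y) * ENNReal.ofReal (1 / (α⁻¹ * G y * t y) ^ 2) ∂μ := by
        rw [restrict_withDensity hs]
        exact lintegral_withDensity_le_lintegral_mul _ (by fun_prop) _
    _ ≤ ∫⁻ y in s, ENNReal.ofReal (α / c ^ 2) * ENNReal.ofReal (1 / G y) ∂μ := by
        refine setLIntegral_mono' hs fun y hy => ?_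
        rw [← ofReal_mul (mul_nonneg (inv_nonneg.2 hα.le) (hG0 y)), ← ofReal_mul (by positivity)]
        exact ofReal_le_ofReal (inv_mul_mul_one_div_sq_le hα (hG0 y) hc (hct y hy))
    _ = ENNReal.ofReal (α / c ^ 2) * ∫⁻ y in s, ENNReal.ofReal (1 / G y) ∂μ :=
        lintegral_const_mul' _ _ ofReal_ne_top
    _ ≤ ENNReal.ofReal (α / c ^ 2) * ∫⁻ y, ENNReal.ofReal (1 / G y) ∂μ := by
        gcongr
        exact Measure.restrict_le_self

lemma setLIntegral_withDensity_mul_le {d I f : X → ℝ≥0∞} {K M : ℝ≥0∞} (hs : MeasurableSet s)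
    (hd : Measurable d) (hI : ∀ x ∈ s, I x ≤ K) (hf : ∀ x ∈ s, d x * f x ≤ M) :
    ∫⁻ x in s, I x * f x ∂μ.withDensity d ≤ K * M * μ s := by
  calc ∫⁻ x in s, I x * f x ∂μ.withDensity d
      ≤ ∫⁻ x in s, d x * (I x * f x) ∂μ := by
        rw [restrict_withDensity hs]
        exact lintegral_withDensity_le_lintegral_mul _ hd _
    _ ≤ ∫⁻ _ in s, K * M ∂μ := by
        refine setLIntegral_mono' hs fun x hx => ?_
        rw [mul_left_comm]
        exact mul_le_mul' (hI x hx) (hf x hx)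
    _ = K * M * μ s := setLIntegral_const _ _

end WithDensity

theorem double_integral_finite_general
    (μ : Measure ℝ) [IsProbabilityMeasure μ]
    (F G : ℝ → ℝ)
    (hF : ∀ x, F x = (μ (Iic x)).toReal)
    (hGmeas : Measurable G) (hG0 : ∀ y, 0 ≤ G y)
    (hint : (∫⁻ y, ENNReal.ofReal (1 / G y) ∂μ) < ⊤)
    (α : ℝ) (hαpos : 0 < α)
    (C : ℝ → ℝ) (hC : ∀ z, C z = α⁻¹ * G z * (1 - F z))
    (Fstar : Measure ℝ)
    (hFstar : Fstar = μ.withDensity (fun z => ENNReal.ofReal (α⁻¹ * G z)))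
    (a : ℝ) (ha : F a < 1)
    (φ : ℝ → ℝ)
    (M : ℝ) (hφbd : ∀ x ∈ Iic a, |φ x| ≤ M) :
    (∫⁻ x in Iic a,
        (∫⁻ y in Iio x, ENNReal.ofReal (1 / C y ^ 2) ∂Fstar) *
          ENNReal.ofReal (|φ x| * (1 - F x) / C x) ∂Fstar) < ⊤ := by
  obtain rfl : F = cdf μ := funext fun x => by rw [hF, cdf_eq_real, measureReal_def]
  obtain rfl : C = fun z => α⁻¹ * G z * (1 - cdf μ z) := funext hC
  subst hFstar
  have hc : 0 < 1 - cdf μ a := sub_pos.2 ha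
  have hsurv : ∀ x ≤ a, 1 - cdf μ a ≤ 1 - cdf μ x := fun x hx => by
    linarith [(cdf μ).mono hx]
  have hinner : ∀ x ∈ Iic a, ∫⁻ y in Iio x, ENNReal.ofReal (1 / (α⁻¹ * G y * (1 - cdf μ y)) ^ 2)
      ∂μ.withDensity (fun z => ENNReal.ofReal (α⁻¹ * G z)) ≤
        ENNReal.ofReal (α / (1 - cdf μ a) ^ 2) * ∫⁻ y, ENNReal.ofReal (1 / G y) ∂μ :=
    fun x hx => setLIntegral_withDensity_inv_sq_le measurableSet_Iio hGmeas hG0 hαpos hc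
      fun y hy => hsurv y (hy.le.trans hx)
  have houter : ∀ x ∈ Iic a, ENNReal.ofReal (α⁻¹ * G x) *
      ENNReal.ofReal (|φ x| * (1 - cdf μ x) / (α⁻¹ * G x * (1 - cdf μ x))) ≤ ENNReal.ofReal M := by
    intro x hx
    have hw : 0 ≤ α⁻¹ * G x := mul_nonneg (inv_nonneg.2 hαpos.le) (hG0 x)
    rw [← ofReal_mul hw]
    exact ofReal_le_ofReal <| (mul_mul_div_mul_le hw (abs_nonneg _)
      (hc.trans_le (hsurv x hx)).ne').trans (hφbd x hx)
  refine (setLIntegral_withDensity_mul_le measurableSet_Iic (by fun_prop) hinner houter).trans_lt ?_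
  exact mul_lt_top (mul_lt_top (mul_lt_top ofReal_lt_top hint) ofReal_lt_top) (measure_lt_top _ _)

/-- Under condition (A)(ii) `∫ dF/G < ∞`, for any `a` with `F(a) < 1` and `φ` bounded on
`(−∞, a]`, the double integral
`∫_{(-∞,a]} (∫_{(-∞,x)} dF*/C²) |φ(x)| (1−F(x))/C(x) dF*(x)` is finite. -/
theorem double_integral_finite
    (μ : Measure ℝ) [IsProbabilityMeasure μ]
    (F G : ℝ → ℝ)
    (hF : ∀ x, F x = (μ (Iic x)).toReal) (hFcont : Continuous F)
    (hGmeas : Measurable G) (hG0 : ∀ y, 0 ≤ G y) (hG1 : ∀ y, G y ≤ 1)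
    (hint : (∫⁻ y, ENNReal.ofReal (1 / G y) ∂μ) < ⊤)
    (α : ℝ) (hαpos : 0 < α) (hα1 : α ≤ 1)
    (C : ℝ → ℝ) (hC : ∀ z, C z = α⁻¹ * G z * (1 - F z))
    (Fstar : Measure ℝ)
    (hFstar : Fstar = μ.withDensity (fun z => ENNReal.ofReal (α⁻¹ * G z)))
    (a : ℝ) (ha : F a < 1)
    (φ : ℝ → ℝ) (hφmeas : Measurable φ)
    (M : ℝ) (hφbd : ∀ x ∈ Iic a, |φ x| ≤ M) :
    (∫⁻ x in Iic a,
        (∫⁻ y in Iio x, ENNReal.ofReal (1 / C y ^ 2) ∂Fstar) *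
          ENNReal.ofReal (|φ x| * (1 - F x) / C x) ∂Fstar) < ⊤ :=
  double_integral_finite_general μ F G hF hGmeas hG0 hint α hαpos C hC Fstar hFstar a ha φ M hφbd
end

section
/- Let C_n : ℝ → [0,1] be a function with nC_n(y) ≥ 1 for all y in the support of a discrete probability measure F_n* with atoms of mass 1/n. Define B_n(x) = n ∫_{(-∞,x)} log(1 − 1/(nC_n(y) + 1)) dF_n*(y) + ∫_{(-∞,x)} dF_n*(y)/(C_n(y) + 1/n). Then −n^{-1} ∫_{(-∞,x)} dF_n*(y)/C_n(y)^2 ≤ B_n(x) ≤ 0 for every x. -/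
/-!
With `t = n c` one has `1 - 1/(n c + 1) = t/(t+1)` and `1/(c + 1/n) = n/(t+1)`, so the integrand
of `B_n` is `n (log (t/(t+1)) + 1/(t+1))`. The elementary bounds
`-1/t ≤ log (t/(t+1)) ≤ -1/(t+1)` make it lie between `-n/(t(t+1)) ≥ -1/(n c²)` and `0`;
integrating over `(-∞, x)` gives the claim, all integrands being bounded once `n c ≥ 1`.
-/

open MeasureTheory Set

namespace Real

lemma neg_inv_le_log_div_add_one {t : ℝ} (ht : 0 < t) : -t⁻¹ ≤ log (t / (t + 1)) := by
  have h := one_sub_inv_le_log_of_pos (show 0 < t / (t + 1) by positivity)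
  have e : 1 - (t / (t + 1))⁻¹ = -t⁻¹ := by field_simp; ring
  rwa [e] at h

lemma log_div_add_one_le_neg_inv {t : ℝ} (ht : 0 < t) : log (t / (t + 1)) ≤ -(t + 1)⁻¹ := by
  have h := log_le_sub_one_of_pos (show 0 < t / (t + 1) by positivity)
  have e : t / (t + 1) - 1 = -(t + 1)⁻¹ := by field_simp; ring
  rwa [e] at h

end Real

open Real

section Pointwise

variable {n c : ℝ}

lemma one_sub_one_div_mul_add_one_eq_div (hn : 0 < n) (hc : 0 < c) :
    1 - 1 / (n * c + 1) = n * c / (n * c + 1) := by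
  field_simp; ring

lemma one_div_add_one_div_eq_div_mul_add_one (hn : 0 < n) (hc : 0 < c) :
    1 / (c + 1 / n) = n / (n * c + 1) := by
  field_simp

lemma mul_log_one_sub_add_one_div_nonpos (hn : 0 < n) (hc : 0 < c) :
    n * log (1 - 1 / (n * c + 1)) + 1 / (c + 1 / n) ≤ 0 := by
  rw [one_sub_one_div_mul_add_one_eq_div hn hc, one_div_add_one_div_eq_div_mul_add_one hn hc]
  have h := mul_le_mul_of_nonneg_left (log_div_add_one_le_neg_inv (mul_pos hn hc)) hn.le
  have e : n * -(n * c + 1)⁻¹ + n / (n * c + 1) = 0 := by ring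
  linarith

lemma neg_inv_mul_one_div_sq_le_mul_log_one_sub_add_one_div (hn : 0 < n) (hc : 0 < c) :
    -(n⁻¹ * (1 / c ^ 2)) ≤ n * log (1 - 1 / (n * c + 1)) + 1 / (c + 1 / n) := by
  rw [one_sub_one_div_mul_add_one_eq_div hn hc, one_div_add_one_div_eq_div_mul_add_one hn hc]
  have ht : 0 < n * c := mul_pos hn hc
  have h := mul_le_mul_of_nonneg_left (neg_inv_le_log_div_add_one ht) hn.le
  have e : n * -(n * c)⁻¹ + n / (n * c + 1) = -(n / (n * c * (n * c + 1))) := by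
    field_simp; ring
  have e' : n⁻¹ * (1 / c ^ 2) = n / (n * c * (n * c)) := by field_simp
  have hle : n / (n * c * (n * c + 1)) ≤ n / (n * c * (n * c)) := by gcongr; linarith
  linarith

variable (hn : 0 < n) (hc : n⁻¹ ≤ c)
include hn hc

lemma one_le_mul_of_inv_le : 1 ≤ n * c := by
  simpa [hn.ne'] using mul_le_mul_of_nonneg_left hc hn.le

lemma abs_log_one_sub_one_div_mul_add_one_le_one : |log (1 - 1 / (n * c + 1))| ≤ 1 := by
  have hc0 : 0 < c := (inv_pos.2 hn).trans_le hc
  have ht := one_le_mul_of_inv_le hn hc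
  rw [one_sub_one_div_mul_add_one_eq_div hn hc0, abs_le]
  have hlo := neg_inv_le_log_div_add_one (mul_pos hn hc0)
  have hhi := log_div_add_one_le_neg_inv (mul_pos hn hc0)
  have : (n * c)⁻¹ ≤ 1 := inv_le_one_of_one_le₀ ht
  have : 0 ≤ (n * c + 1)⁻¹ := by positivity
  constructor <;> linarith

lemma abs_one_div_add_one_div_le : |1 / (c + 1 / n)| ≤ n := by
  have hc0 : 0 < c := (inv_pos.2 hn).trans_le hc
  rw [one_div_add_one_div_eq_div_mul_add_one hn hc0, abs_of_pos (by positivity),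
    div_le_iff₀ (by positivity)]
  nlinarith [mul_pos hn hc0]

lemma abs_one_div_sq_le : |1 / c ^ 2| ≤ n ^ 2 := by
  have hc0 : 0 < c := (inv_pos.2 hn).trans_le hc
  have ht := one_le_mul_of_inv_le hn hc
  rw [abs_of_pos (by positivity), div_le_iff₀ (by positivity)]
  nlinarith

end Pointwise

section Integrable

variable {α : Type*} [MeasurableSpace α] {μ : Measure α} [IsFiniteMeasure μ]
  {n : ℝ} {c : α → ℝ} (hn : 0 < n) (hcm : Measurable c) (hc : ∀ᵐ y ∂μ, n⁻¹ ≤ c y)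
include hn hcm hc

lemma integrable_log_one_sub_one_div_mul_add_one :
    Integrable (fun y ↦ log (1 - 1 / (n * c y + 1))) μ :=
  .of_bound (measurable_log.comp (by fun_prop)).aestronglyMeasurable 1 <| hc.mono fun _ hy ↦
    abs_log_one_sub_one_div_mul_add_one_le_one hn hy

lemma integrable_one_div_add_one_div : Integrable (fun y ↦ 1 / (c y + 1 / n)) μ :=
  .of_bound (by fun_prop : Measurable _).aestronglyMeasurable n <|
    hc.mono fun _ hy ↦ abs_one_div_add_one_div_le hn hy

lemma integrable_one_div_sq : Integrable (fun y ↦ 1 / c y ^ 2) μ :=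
  .of_bound (by fun_prop : Measurable _).aestronglyMeasurable (n ^ 2) <|
    hc.mono fun _ hy ↦ abs_one_div_sq_le hn hy

end Integrable

/-- Bounds on `B_n(x)`: with `nC_n ≥ 1` on the support of the empirical measure `F_n*`,
`−n⁻¹ ∫_{(-∞,x)} dF_n*/C_n² ≤ B_n(x) ≤ 0`. -/
theorem Bn_bounds
    (n : ℕ) (hn : 1 ≤ n)
    (μn : Measure ℝ) [IsProbabilityMeasure μn]
    (Cn : ℝ → ℝ) (hCnmeas : Measurable Cn)
    (hCn : ∀ᵐ y ∂μn, (n : ℝ)⁻¹ ≤ Cn y ∧ Cn y ≤ 1)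
    (Bn : ℝ → ℝ)
    (hBn : ∀ x, Bn x =
      n * (∫ y in Iio x, Real.log (1 - 1 / (n * Cn y + 1)) ∂μn) +
      ∫ y in Iio x, 1 / (Cn y + 1 / n) ∂μn) :
    ∀ x : ℝ,
      -((n : ℝ)⁻¹ * ∫ y in Iio x, 1 / Cn y ^ 2 ∂μn) ≤ Bn x ∧ Bn x ≤ 0 := by
  intro x
  have hn0 : (0 : ℝ) < n := by exact_mod_cast hn
  have hlow : ∀ᵐ y ∂μn.restrict (Iio x), (n : ℝ)⁻¹ ≤ Cn y :=
    ae_restrict_of_ae (hCn.mono fun _ hy ↦ hy.1)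
  have hpos : ∀ᵐ y ∂μn.restrict (Iio x), 0 < Cn y :=
    hlow.mono fun _ hy ↦ (inv_pos.2 hn0).trans_le hy
  have hlog := integrable_log_one_sub_one_div_mul_add_one hn0 hCnmeas hlow
  have hrec := integrable_one_div_add_one_div hn0 hCnmeas hlow
  have hBx : Bn x = ∫ y in Iio x,
      ((n : ℝ) * log (1 - 1 / (n * Cn y + 1)) + 1 / (Cn y + 1 / n)) ∂μn := by
    rw [hBn x, integral_add (hlog.const_mul _) hrec, integral_const_mul]
  rw [hBx, ← integral_const_mul, ← integral_neg]
  exact ⟨integral_mono_ae ((integrable_one_div_sq hn0 hCnmeas hlow).const_mul _).neg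
      ((hlog.const_mul _).add hrec) (hpos.mono fun _ hy ↦
        neg_inv_mul_one_div_sq_le_mul_log_one_sub_add_one_div hn0 hy),
    integral_nonpos_of_ae (hpos.mono fun _ hy ↦ mul_log_one_sub_add_one_div_nonpos hn0 hy)⟩
end

section
/- Let F be a continuous distribution function with F(0) = 0. For z with F(z) < 1, ∫_{(0,z]} (∫_{(0,y]} dF(u)/(1−F(u))^2) dF(y)/( (1−F(y)) ) ≤ ∫_{(0,z]} dF(y)/(1−F(y))^2, using ∫_{(0,y]} dF(u)/(1−F(u))^2 ≤ 1/(1−F(y)). -/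
/-!
Since `F` is continuous, it pushes `μ` forward to Lebesgue measure on `[0, 1]` (probability
integral transform). Hence `∫_{(0,y]} dF / (1 - F)² ≤ ∫_0^{F y} dt / (1 - t)² = 1 / (1 - F y) - 1`,
so the outer integrand is at most `1 / (1 - F y)² - 1 / (1 - F y) ≤ 1 / (1 - F y)²`.
-/

open MeasureTheory Set Filter ProbabilityTheory

theorem continuousOn_one_div_one_sub_sq {a : ℝ} (ha : a < 1) :
    ContinuousOn (fun t : ℝ => 1 / (1 - t) ^ 2) (Iic a) :=
  continuousOn_const.div (by fun_prop) fun _ ht =>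
    pow_ne_zero 2 (sub_pos.2 (lt_of_le_of_lt ht ha)).ne'

theorem integral_Icc_one_div_one_sub_sq {a : ℝ} (h0 : 0 ≤ a) (ha : a < 1) :
    ∫ t in Icc 0 a, 1 / (1 - t) ^ 2 = 1 / (1 - a) - 1 := by
  have hderiv : ∀ t ∈ uIcc 0 a, HasDerivAt (fun t : ℝ => (1 - t)⁻¹) (1 / (1 - t) ^ 2) t := by
    intro t ht
    have ht1 : 1 - t ≠ 0 := (sub_pos.2 (lt_of_le_of_lt (uIcc_of_le h0 ▸ ht).2 ha)).ne'
    have h := ((hasDerivAt_id' t).const_sub 1).inv ht1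
    rw [neg_neg] at h
    exact h
  rw [integral_Icc_eq_integral_Ioc, ← intervalIntegral.integral_of_le h0,
    intervalIntegral.integral_eq_sub_of_hasDerivAt hderiv
      ((continuousOn_one_div_one_sub_sq ha).mono
        (uIcc_of_le h0 ▸ Icc_subset_Iic_self)).intervalIntegrable]
  norm_num

namespace ProbabilityTheory

variable {μ : Measure ℝ}

theorem Iic_subset_preimage_cdf_Icc (y : ℝ) : Iic y ⊆ cdf μ ⁻¹' Icc 0 (cdf μ y) :=
  fun x hx => ⟨cdf_nonneg μ x, monotone_cdf μ hx⟩

variable [IsProbabilityMeasure μ]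

/-- The closed lower set `{cdf ≤ t}` is `Iic c` for its supremum `c`, and continuity forces
`cdf μ c = t`; it can only be empty when `t ≤ 0`. -/
theorem measure_cdf_preimage_Iic (hc : Continuous (cdf μ)) {t : ℝ} (ht : t < 1) :
    μ (cdf μ ⁻¹' Iic t) = ENNReal.ofReal t := by
  set S := cdf μ ⁻¹' Iic t
  rcases S.eq_empty_or_nonempty with hS | hS
  · have ht0 : t ≤ 0 := by
      by_contra! ht0
      obtain ⟨x, hx⟩ := ((tendsto_cdf_atBot μ).eventually (eventually_lt_nhds ht0)).exists
      exact hS.subset (show x ∈ S from hx.le)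
    rw [hS, measure_empty, ENNReal.ofReal_of_nonpos ht0]
  have hbdd : BddAbove S := by
    obtain ⟨b, hb⟩ := eventually_atTop.1 ((tendsto_cdf_atTop μ).eventually (eventually_gt_nhds ht))
    exact ⟨b, fun x hx => not_lt.1 fun hbx => (hb x hbx.le).not_ge hx⟩
  have hS_eq : S = Iic (sSup S) := by
    rw [← lowerClosure_eq_Iic_csSup hS hbdd (isClosed_Iic.preimage hc),
      ((isLowerSet_Iic t).preimage (monotone_cdf μ)).lowerClosure]
  have hsup : cdf μ (sSup S) = t := by
    refine le_antisymm (hS_eq.superset self_mem_Iic : sSup S ∈ S) (not_lt.1 fun hlt => ?_)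
    obtain ⟨x, hx_gt, hx_lt⟩ := ((frequently_gt_nhds (sSup S)).and_eventually
      (hc.continuousAt.eventually_lt continuousAt_const hlt)).exists
    exact hx_gt.not_ge (hS_eq.subset (show x ∈ S from hx_lt.le))
  rw [hS_eq, ← ofReal_cdf, hsup]

/-- Probability integral transform. -/
theorem map_cdf_eq_restrict_Icc (hc : Continuous (cdf μ)) :
    μ.map (cdf μ) = volume.restrict (Icc 0 1) := by
  refine Measure.ext_of_Iic _ _ fun a => ?_
  rw [Measure.map_apply hc.measurable measurableSet_Iic, Measure.restrict_apply measurableSet_Iic]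
  rcases lt_or_ge a 1 with ha | ha
  · have h_inter : Iic a ∩ Icc 0 1 = Icc 0 a := by
      ext x
      simp only [mem_inter_iff, mem_Iic, mem_Icc]
      grind
    rw [measure_cdf_preimage_Iic hc ha, h_inter, Real.volume_Icc, sub_zero]
  · have h_univ : cdf μ ⁻¹' Iic a = univ :=
      eq_univ_of_forall fun x => (cdf_le_one μ x).trans ha
    rw [h_univ, inter_eq_right.2 (Icc_subset_Iic_self.trans (Iic_subset_Iic.2 ha))]
    simp

variable {E : Type*} [NormedAddCommGroup E] {g : ℝ → E} {s : Set ℝ}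

theorem integrableOn_preimage_cdf (hc : Continuous (cdf μ)) (hs : MeasurableSet s)
    (hg : IntegrableOn g (s ∩ Icc 0 1)) :
    IntegrableOn (fun x => g (cdf μ x)) (cdf μ ⁻¹' s) μ := by
  rw [IntegrableOn, ← Measure.restrict_restrict hs, ← map_cdf_eq_restrict_Icc hc,
    Measure.restrict_map hc.measurable hs] at hg
  exact (integrable_map_measure hg.aestronglyMeasurable hc.aemeasurable.restrict).1 hg

theorem setIntegral_preimage_cdf [NormedSpace ℝ E] (hc : Continuous (cdf μ)) (hs : MeasurableSet s)
    (hg : AEStronglyMeasurable g (volume.restrict (Icc 0 1))) :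
    ∫ x in cdf μ ⁻¹' s, g (cdf μ x) ∂μ = ∫ t in s ∩ Icc 0 1, g t := by
  rw [← setIntegral_map hs (map_cdf_eq_restrict_Icc hc ▸ hg) hc.aemeasurable,
    map_cdf_eq_restrict_Icc hc, Measure.restrict_restrict hs]

variable {y : ℝ}

theorem integrableOn_one_div_one_sub_cdf_sq (hc : Continuous (cdf μ)) {a : ℝ} (ha : a < 1) :
    IntegrableOn (fun x => 1 / (1 - cdf μ x) ^ 2) (cdf μ ⁻¹' Icc 0 a) μ :=
  integrableOn_preimage_cdf hc measurableSet_Icc <|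
    ((continuousOn_one_div_one_sub_sq ha).mono fun _ ht => ht.1.2).integrableOn_compact
      (isCompact_Icc.inter_right isClosed_Icc)

theorem setIntegral_one_div_one_sub_cdf_sq_le (hc : Continuous (cdf μ)) (hy : cdf μ y < 1)
    (hs : s ⊆ Iic y) : ∫ x in s, 1 / (1 - cdf μ x) ^ 2 ∂μ ≤ 1 / (1 - cdf μ y) - 1 :=
  calc ∫ x in s, 1 / (1 - cdf μ x) ^ 2 ∂μ
      ≤ ∫ x in cdf μ ⁻¹' Icc 0 (cdf μ y), 1 / (1 - cdf μ x) ^ 2 ∂μ :=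
        setIntegral_mono_set (integrableOn_one_div_one_sub_cdf_sq hc hy)
          (ae_of_all _ fun _ => by positivity)
          (hs.trans (Iic_subset_preimage_cdf_Icc y)).eventuallyLE
    _ = ∫ t in Icc 0 (cdf μ y), 1 / (1 - t) ^ 2 := by
        rw [setIntegral_preimage_cdf (g := fun t => 1 / (1 - t) ^ 2) hc measurableSet_Icc
          (by measurability), inter_eq_left.2 (Icc_subset_Icc_right (cdf_le_one μ y))]
    _ = 1 / (1 - cdf μ y) - 1 := integral_Icc_one_div_one_sub_sq (cdf_nonneg μ y) hy

end ProbabilityTheory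

theorem double_integral_hazard_bound_general
    (μ : Measure ℝ) [IsProbabilityMeasure μ]
    (F : ℝ → ℝ) (hF : ∀ x, F x = (μ (Iic x)).toReal)
    (hFcont : Continuous F) :
    ∀ z : ℝ, F z < 1 →
      (∫ y in Ioc 0 z, (∫ u in Ioc 0 y, 1 / (1 - F u)^2 ∂μ) * (1 / (1 - F y)) ∂μ)
        ≤ ∫ y in Ioc 0 z, 1 / (1 - F y)^2 ∂μ := by
  obtain rfl : F = cdf μ := funext fun x => by rw [hF, cdf_eq_real, measureReal_def]
  intro z hz
  have hlt : ∀ y ∈ Ioc 0 z, cdf μ y < 1 := fun y hy => (monotone_cdf μ hy.2).trans_lt hz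
  refine integral_mono_of_nonneg (ae_restrict_of_forall_mem measurableSet_Ioc fun y hy => ?_)
    ((integrableOn_one_div_one_sub_cdf_sq hFcont hz).mono_set
      (Ioc_subset_Iic_self.trans (Iic_subset_preimage_cdf_Icc z)))
    (ae_restrict_of_forall_mem measurableSet_Ioc fun y hy => ?_)
  · have := sub_pos.2 (hlt y hy)
    exact mul_nonneg (integral_nonneg fun _ => by positivity) (by positivity)
  · have := sub_pos.2 (hlt y hy)
    calc (∫ u in Ioc 0 y, 1 / (1 - cdf μ u) ^ 2 ∂μ) * (1 / (1 - cdf μ y))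
        ≤ (1 / (1 - cdf μ y) - 1) * (1 / (1 - cdf μ y)) :=
          mul_le_mul_of_nonneg_right
            (setIntegral_one_div_one_sub_cdf_sq_le hFcont (hlt y hy) Ioc_subset_Iic_self)
            (by positivity)
      _ = 1 / (1 - cdf μ y) ^ 2 - 1 / (1 - cdf μ y) := by rw [← one_div_pow]; ring
      _ ≤ 1 / (1 - cdf μ y) ^ 2 := sub_le_self _ (by positivity)

/-- The double-integral bound of Lemma 3.9:
`∫_{(0,z]} (∫_{(0,y]} dF/(1−F)²) dF(y)/(1−F(y)) ≤ ∫_{(0,z]} dF/(1−F)²`. -/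
theorem double_integral_hazard_bound
    (μ : Measure ℝ) [IsProbabilityMeasure μ]
    (F : ℝ → ℝ) (hF : ∀ x, F x = (μ (Iic x)).toReal)
    (hFcont : Continuous F) (hF0 : F 0 = 0) :
    ∀ z : ℝ, F z < 1 →
      (∫ y in Ioc 0 z, (∫ u in Ioc 0 y, 1 / (1 - F u)^2 ∂μ) * (1 / (1 - F y)) ∂μ)
        ≤ ∫ y in Ioc 0 z, 1 / (1 - F y)^2 ∂μ :=
  double_integral_hazard_bound_general μ F hF hFcont
end
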